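/- For every s ≥ 3, the graph G₃(s) is a maximal 3-γc-vertex critical graph. -/

import Mathlib

/-!
The path `r₀ w₀ z₁` is a connected dominating set of `G₃(s)`, while no edge dominates the graph;
since a connected dominating set with at most two vertices is a vertex or an edge,
`γc(G₃(s)) = 3`. Adding a missing edge, or deleting any vertex `v`, creates a dominating edge.
A dominating edge of `G₃(s) - v` in particular makes `G₃(s) - v` connected, so `G₃(s)` is
`2`-connected.
-/

open Finset

variable {V : Type*}

/-- `D` is a connected dominating set of `G`: every vertex is in `D` or adjacent to a
vertex of `D`, and the subgraph induced by `D` is connected. -/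
def IsConnDomSet (G : SimpleGraph V) (D : Set V) : Prop :=
  (∀ v : V, v ∈ D ∨ ∃ u ∈ D, G.Adj u v) ∧ (G.induce D).Connected

/-- The connected domination number `γc(G)`. -/
noncomputable def gammaC (G : SimpleGraph V) [Fintype V] : ℕ :=
  sInf {k | ∃ D : Finset V, D.card = k ∧ IsConnDomSet G ↑D}

/-- The independence number `α(G)`. -/
noncomputable def alpha (G : SimpleGraph V) [Fintype V] : ℕ :=
  sSup {k | ∃ I : Finset V, I.card = k ∧ (↑I : Set V).Pairwise fun u v => ¬ G.Adj u v}

/-- The clique number `ω(G)`. -/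
noncomputable def omegaNum (G : SimpleGraph V) [Fintype V] : ℕ :=
  sSup {k | ∃ W : Finset V, W.card = k ∧ (↑W : Set V).Pairwise G.Adj}

/-- The minimum degree `δ(G)`. -/
noncomputable def minDeg (G : SimpleGraph V) [Fintype V] : ℕ :=
  sInf {k | ∃ v : V, (G.neighborSet v).ncard = k}

/-- The vertex connectivity `κ(G)`: the minimum size of a set of vertices whose
deletion leaves a graph that is disconnected or has at most one vertex
(so `κ = n - 1` for the complete graph on `n` vertices). -/
noncomputable def kappa (G : SimpleGraph V) [Fintype V] : ℕ :=
  sInf {k | ∃ S : Finset V, S.card = k ∧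
    (¬ (G.induce (↑S : Set V)ᶜ).Connected ∨ ((↑S : Set V)ᶜ).Subsingleton)}

/-- `G` is `3`-`γc`-edge critical: `γc(G) = 3` and adding any missing edge decreases `γc`. -/
def EdgeCritical3 (G : SimpleGraph V) [Fintype V] : Prop :=
  gammaC G = 3 ∧ ∀ u v : V, u ≠ v → ¬ G.Adj u v →
    gammaC (G ⊔ SimpleGraph.fromEdgeSet {s(u, v)}) < 3

/-- `G` is `3`-`γc`-vertex critical: `G` is `2`-connected, `γc(G) = 3` and deleting any
vertex decreases `γc`. -/
def VertexCritical3 (G : SimpleGraph V) [Fintype V] [DecidableEq V] : Prop :=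
  2 ≤ kappa G ∧ gammaC G = 3 ∧ ∀ v : V, gammaC (G.induce {w | w ≠ v}) < 3

/-- `G` is maximal `3`-`γc`-vertex critical. -/
def MaximalVertexCritical3 (G : SimpleGraph V) [Fintype V] [DecidableEq V] : Prop :=
  EdgeCritical3 G ∧ VertexCritical3 G

/-- The graph `G₃(s)` on the `4s` vertices `(0, i) = rᵢ`, `(1, i) = tᵢ`, `(2, i) = wᵢ`,
`(3, i) = zᵢ`: `R` and `Z` are cliques, `T` and `W` are independent sets, `rᵢ` is
adjacent to every vertex of `T ∪ W` except `tᵢ`, `tᵢ` is adjacent to every vertex of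
`W ∪ Z` except `wᵢ`, `wᵢ` is adjacent to every vertex of `Z` except `zᵢ`, and there
are no edges between `R` and `Z`. -/
def G3 (s : ℕ) : SimpleGraph (Fin 4 × Fin s) :=
  SimpleGraph.fromRel fun a b =>
    (a.1 = 0 ∧ b.1 = 0 ∧ a.2 ≠ b.2) ∨
    (a.1 = 3 ∧ b.1 = 3 ∧ a.2 ≠ b.2) ∨
    (a.1 = 0 ∧ b.1 = 1 ∧ a.2 ≠ b.2) ∨
    (a.1 = 0 ∧ b.1 = 2) ∨
    (a.1 = 1 ∧ b.1 = 2 ∧ a.2 ≠ b.2) ∨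
    (a.1 = 1 ∧ b.1 = 3) ∨
    (a.1 = 2 ∧ b.1 = 3 ∧ a.2 ≠ b.2)

open SimpleGraph

namespace SimpleGraph

variable {G : SimpleGraph V}

theorem induce_pair_connected_iff {a b : V} (hab : a ≠ b) :
    (G.induce {a, b}).Connected ↔ G.Adj a b := by
  refine ⟨fun h => ?_, induce_pair_connected_of_adj⟩
  have : Nontrivial ({a, b} : Set V) := ⟨⟨a, by simp⟩, ⟨b, by simp⟩, by simpa using hab⟩
  obtain ⟨⟨w, hw⟩, haw⟩ := h.preconnected.exists_adj_of_nontrivial ⟨a, by simp⟩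
  rcases hw with rfl | rfl
  · exact absurd rfl haw.ne
  · exact haw

theorem induce_triple_connected_of_adj {a b c : V} (hab : G.Adj a b) (hbc : G.Adj b c) :
    (G.induce {a, b, c}).Connected :=
  connected_induce_union (s := {a}) Preconnected.of_subsingleton
    (induce_pair_connected_of_adj hbc).preconnected rfl (by simp) hab

end SimpleGraph

def IsDominatingEdge (G : SimpleGraph V) (a b : V) : Prop :=
  G.Adj a b ∧ ∀ v, v = a ∨ v = b ∨ G.Adj a v ∨ G.Adj b v

section ConnDomSet

variable {G : SimpleGraph V}

theorem IsConnDomSet.connected {D : Set V} (h : IsConnDomSet G D) : G.Connected := by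
  obtain ⟨hdom, hD⟩ := h
  have hnear : ∀ x, ∃ d ∈ D, G.Reachable x d := fun x => by
    rcases hdom x with hx | ⟨d, hd, hdx⟩
    · exact ⟨x, hx, .rfl⟩
    · exact ⟨d, hd, hdx.symm.reachable⟩
  obtain ⟨⟨d, -⟩⟩ := hD.nonempty
  have : Nonempty V := ⟨d⟩
  refine Connected.mk fun x y => ?_
  obtain ⟨dx, hdx, hx⟩ := hnear x
  obtain ⟨dy, hdy, hy⟩ := hnear y
  exact hx.trans (((hD ⟨dx, hdx⟩ ⟨dy, hdy⟩).map (Embedding.induce D).toHom).trans hy.symm)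

theorem IsDominatingEdge.isConnDomSet {a b : V} (h : IsDominatingEdge G a b) :
    IsConnDomSet G {a, b} := by
  refine ⟨fun v => ?_, induce_pair_connected_of_adj h.1⟩
  rcases h.2 v with rfl | rfl | hv | hv <;> simp [*]

theorem isConnDomSet_triple {a b c : V} (hab : G.Adj a b) (hbc : G.Adj b c)
    (hdom : ∀ v, v = a ∨ v = b ∨ v = c ∨ G.Adj a v ∨ G.Adj b v ∨ G.Adj c v) :
    IsConnDomSet G {a, b, c} := by
  refine ⟨fun v => ?_, induce_triple_connected_of_adj hab hbc⟩
  rcases hdom v with rfl | rfl | rfl | hv | hv | hv <;> simp [*]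

theorem isDominatingEdge_induce_ne {v a b : V} (ha : a ≠ v) (hb : b ≠ v) (hab : G.Adj a b)
    (hdom : ∀ x ≠ v, x = a ∨ x = b ∨ G.Adj a x ∨ G.Adj b x) :
    IsDominatingEdge (G.induce {w | w ≠ v}) ⟨a, ha⟩ ⟨b, hb⟩ :=
  ⟨hab, fun ⟨x, hx⟩ => by simpa [Subtype.ext_iff] using hdom x hx⟩

theorem isDominatingEdge_sup_edge_self {u v : V} (huv : u ≠ v)
    (hdom : ∀ x, x = u ∨ x = v ∨ G.Adj u x ∨ G.Adj v x) :
    IsDominatingEdge (G ⊔ fromEdgeSet {s(u, v)}) u v :=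
  ⟨by simp [huv], fun x => by rcases hdom x with h | h | h | h <;> simp [h]⟩

theorem isDominatingEdge_sup_edge_of_adj {u v a : V} (huv : u ≠ v) (hav : G.Adj a v)
    (hdom : ∀ x ≠ u, x = a ∨ x = v ∨ G.Adj a x ∨ G.Adj v x) :
    IsDominatingEdge (G ⊔ fromEdgeSet {s(u, v)}) a v := by
  refine ⟨.inl hav, fun x => ?_⟩
  obtain rfl | hxu := eq_or_ne x u
  · simp [huv.symm]
  · rcases hdom x hxu with h | h | h | h <;> simp [h]

theorem three_le_card_of_isConnDomSet [Nontrivial V] (hconn : G.Connected)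
    (hno : ∀ a b, ¬ IsDominatingEdge G a b) {D : Finset V} (hD : IsConnDomSet G ↑D) :
    3 ≤ #D := by
  classical
  obtain ⟨⟨d, hd⟩⟩ := hD.2.nonempty
  have hpos := card_pos.mpr ⟨d, hd⟩
  by_contra! hcard
  obtain ⟨a, rfl⟩ | ⟨a, b, hab, rfl⟩ : (∃ a, D = {a}) ∨ ∃ a b, a ≠ b ∧ D = {a, b} := by
    rcases (by omega : #D = 1 ∨ #D = 2) with h | h
    · exact .inl (card_eq_one.mp h)
    · exact .inr (card_eq_two.mp h)
  · obtain ⟨b, hab⟩ := hconn.preconnected.exists_adj_of_nontrivial a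
    refine hno a b ⟨hab, fun v => ?_⟩
    rcases hD.1 v with hv | ⟨u, hu, huv⟩ <;> simp_all
  · rw [coe_pair] at hD
    refine hno a b ⟨(induce_pair_connected_iff hab).mp hD.2, fun v => ?_⟩
    rcases hD.1 v with hv | ⟨u, hu, huv⟩
    · rcases hv with rfl | rfl <;> simp
    · rcases hu with rfl | rfl <;> simp [huv]

variable [Fintype V]

theorem gammaC_le_card {D : Finset V} (hD : IsConnDomSet G ↑D) : gammaC G ≤ #D :=
  Nat.sInf_le ⟨D, rfl, hD⟩

theorem gammaC_eq_card {D : Finset V} (hD : IsConnDomSet G ↑D)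
    (hmin : ∀ D' : Finset V, IsConnDomSet G ↑D' → #D ≤ #D') : gammaC G = #D :=
  (gammaC_le_card hD).antisymm <| le_csInf ⟨_, D, rfl, hD⟩ fun _ ⟨D', hD'card, hD'⟩ =>
    hD'card ▸ hmin D' hD'

theorem IsDominatingEdge.gammaC_le_two {a b : V} (h : IsDominatingEdge G a b) :
    gammaC G ≤ 2 := by
  classical
  exact (gammaC_le_card (by simpa using h.isConnDomSet)).trans card_le_two

theorem two_le_kappa (hconn : G.Connected) (hdel : ∀ v, (G.induce {w | w ≠ v}).Connected)
    (hcard : 3 ≤ Fintype.card V) : 2 ≤ kappa G := by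
  classical
  refine le_csInf ⟨_, univ, rfl, .inr (by simp)⟩ fun k ⟨S, hSk, hS⟩ => ?_
  subst hSk
  by_contra! hS1
  rcases hS with hdisc | hsub
  · obtain rfl | ⟨v, rfl⟩ : S = ∅ ∨ ∃ v, S = {v} := by
      rcases (by omega : #S = 0 ∨ #S = 1) with h | h
      · exact .inl (card_eq_zero.mp h)
      · exact .inr (card_eq_one.mp h)
    · rw [coe_empty, Set.compl_empty] at hdisc
      exact hdisc ((induceUnivIso G).connected_iff.mpr hconn)
    · rw [coe_singleton] at hdisc
      exact hdisc (hdel v)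
  · have := card_le_one_iff_subsingleton.mpr (by simpa using hsub : (↑Sᶜ : Set V).Subsingleton)
    rw [card_compl] at this
    omega

end ConnDomSet

section G3

variable {s : ℕ}

theorem G3_not_isDominatingEdge (a b : Fin 4 × Fin s) : ¬ IsDominatingEdge (G3 s) a b := by
  rintro ⟨hab, hdom⟩
  suffices ∃ x, x ≠ a ∧ x ≠ b ∧ ¬ (G3 s).Adj a x ∧ ¬ (G3 s).Adj b x by
    obtain ⟨x, hxa, hxb, hax, hbx⟩ := this
    rcases hdom x with h | h | h | h <;> contradiction
  clear hdom
  obtain ⟨c, i⟩ := a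
  obtain ⟨d, j⟩ := b
  wlog hcd : c ≤ d generalizing c d i j
  · obtain ⟨x, hxb, hxa, hbx, hax⟩ := this d j c i hab.symm (le_of_not_ge hcd)
    exact ⟨x, hxa, hxb, hax, hbx⟩
  fin_cases c <;> fin_cases d <;> simp [G3] at hab hcd
  -- The edges `rᵢrⱼ, rᵢtⱼ, rᵢwⱼ, tᵢwⱼ, tᵢzⱼ, wᵢzⱼ, zᵢzⱼ` miss `zᵢ, tᵢ, zⱼ, tⱼ, rᵢ, wⱼ, rᵢ`.
  · exact ⟨(3, i), by simp_all [G3, eq_comm]⟩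
  · exact ⟨(1, i), by simp_all [G3, eq_comm]⟩
  · exact ⟨(3, j), by simp_all [G3, eq_comm]⟩
  · exact ⟨(1, j), by simp_all [G3, eq_comm]⟩
  · exact ⟨(0, i), by simp_all [G3, eq_comm]⟩
  · exact ⟨(2, j), by simp_all [G3, eq_comm]⟩
  · exact ⟨(0, i), by simp_all [G3, eq_comm]⟩

theorem G3_isConnDomSet {i j : Fin s} (hij : i ≠ j) :
    IsConnDomSet (G3 s) {(0, i), (2, i), (3, j)} := by
  refine isConnDomSet_triple (by simp [G3]) (by simp [G3, hij]) fun ⟨c, k⟩ => ?_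
  fin_cases c <;> simp [G3]
  grind

theorem G3_exists_isDominatingEdge_sup_edge {u v : Fin 4 × Fin s} (huv : u ≠ v)
    (hnadj : ¬ (G3 s).Adj u v) :
    ∃ a b, IsDominatingEdge (G3 s ⊔ fromEdgeSet {s(u, v)}) a b := by
  obtain ⟨c, i⟩ := u
  obtain ⟨d, j⟩ := v
  wlog hcd : c ≤ d generalizing c d i j
  · rw [Sym2.eq_swap]
    exact this d j c i huv.symm (fun h => hnadj h.symm) (le_of_not_ge hcd)
  fin_cases c <;> fin_cases d <;> simp [G3, Prod.ext_iff] at huv hnadj hcd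
  · exact absurd (hnadj huv).1 huv
  · subst hnadj
    exact ⟨_, _, isDominatingEdge_sup_edge_self (by simp) fun ⟨e, k⟩ => by
      fin_cases e <;> simp [G3] <;> grind⟩
  · exact ⟨_, _, isDominatingEdge_sup_edge_self (by simp) fun ⟨e, k⟩ => by
      fin_cases e <;> simp [G3] <;> grind⟩
  · exact ⟨(0, i), _, isDominatingEdge_sup_edge_of_adj (by simpa using huv)
      (by simp [G3, huv, Ne.symm huv]) fun ⟨e, k⟩ hx => by
        fin_cases e <;> simp [G3] at hx ⊢ <;> grind⟩
  · subst hnadj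
    exact ⟨_, _, isDominatingEdge_sup_edge_self (by simp) fun ⟨e, k⟩ => by
      fin_cases e <;> simp [G3] <;> grind⟩
  · exact ⟨(3, i), _, isDominatingEdge_sup_edge_of_adj (by simpa using huv)
      (by simp [G3, huv, Ne.symm huv]) fun ⟨e, k⟩ hx => by
        fin_cases e <;> simp [G3] at hx ⊢ <;> grind⟩
  · subst hnadj
    exact ⟨_, _, isDominatingEdge_sup_edge_self (by simp) fun ⟨e, k⟩ => by
      fin_cases e <;> simp [G3] <;> grind⟩
  · exact absurd (hnadj huv).1 huv

theorem G3_exists_isDominatingEdge_induce_ne [Nontrivial (Fin s)] (v : Fin 4 × Fin s) :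
    ∃ a b, IsDominatingEdge ((G3 s).induce {w | w ≠ v}) a b := by
  obtain ⟨c, i⟩ := v
  obtain ⟨j, hji⟩ := exists_ne i
  fin_cases c
  · exact ⟨_, _, isDominatingEdge_induce_ne (a := (1, i)) (b := (3, j)) (by simp) (by simp)
      (by simp [G3]) fun ⟨e, k⟩ hx => by fin_cases e <;> simp [G3] at hx ⊢ <;> grind⟩
  · exact ⟨_, _, isDominatingEdge_induce_ne (a := (0, i)) (b := (1, j)) (by simp) (by simp [hji])
      (by simp [G3, hji.symm]) fun ⟨e, k⟩ hx => by fin_cases e <;> simp [G3] at hx ⊢ <;> grind⟩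
  · exact ⟨_, _, isDominatingEdge_induce_ne (a := (2, j)) (b := (3, i)) (by simp [hji]) (by simp)
      (by simp [G3, hji]) fun ⟨e, k⟩ hx => by fin_cases e <;> simp [G3] at hx ⊢ <;> grind⟩
  · exact ⟨_, _, isDominatingEdge_induce_ne (a := (0, j)) (b := (2, i)) (by simp) (by simp)
      (by simp [G3]) fun ⟨e, k⟩ hx => by fin_cases e <;> simp [G3] at hx ⊢ <;> grind⟩

theorem G3_connected [Nontrivial (Fin s)] : (G3 s).Connected := by
  obtain ⟨i, j, hij⟩ := exists_pair_ne (Fin s)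
  exact (G3_isConnDomSet hij).connected

theorem gammaC_G3 [Nontrivial (Fin s)] : gammaC (G3 s) = 3 := by
  classical
  obtain ⟨i, j, hij⟩ := exists_pair_ne (Fin s)
  have hcard : #({(0, i), (2, i), (3, j)} : Finset (Fin 4 × Fin s)) = 3 :=
    card_eq_three.mpr ⟨_, _, _, by simp, by simp, by simp, rfl⟩
  have hD : IsConnDomSet (G3 s) ↑({(0, i), (2, i), (3, j)} : Finset (Fin 4 × Fin s)) := by
    simpa using G3_isConnDomSet hij
  rw [← hcard, gammaC_eq_card hD fun D' hD' => ?_]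
  rw [hcard]
  exact three_le_card_of_isConnDomSet hD.connected G3_not_isDominatingEdge hD'

end G3

/-- for every `s ≥ 3`, the graph `G₃(s)` is a maximal
`3`-`γc`-vertex critical graph. -/
theorem stmt_15 (s : ℕ) (hs : 3 ≤ s) : MaximalVertexCritical3 (G3 s) := by
  have : Nontrivial (Fin s) := Fin.nontrivial_iff_two_le.mpr (by omega)
  have hdel := G3_exists_isDominatingEdge_induce_ne (s := s)
  refine ⟨⟨gammaC_G3, fun u v huv hnadj => ?_⟩, ?_, gammaC_G3, fun v => ?_⟩
  · obtain ⟨a, b, h⟩ := G3_exists_isDominatingEdge_sup_edge huv hnadj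
    exact h.gammaC_le_two.trans_lt (by norm_num)
  · refine two_le_kappa G3_connected (fun v => ?_) (by simp; omega)
    obtain ⟨a, b, h⟩ := hdel v
    exact h.isConnDomSet.connected
  · obtain ⟨a, b, h⟩ := hdel v
    exact h.gammaC_le_two.trans_lt (by norm_num)
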